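/- Define C(r) = -Σ_{s=0}^{r-1} Σ_{t=0}^{r-1} OF(2s+2t-2) / (2^{2s+2t} s! t!), where OF is the odd factorial extended by OF(-2n) = (-1)^n / OF(2n) and OF(0) = 1. Then for every positive integer r, C(r) = Γ(2r - 3/2)/(√π Γ(2r-1)) + Σ_{s=0}^{r-2} (Γ(r+s-1/2)/(√π Γ(r+s+1))) I_{1/2}(r, s+1), where I_{1/2}(a,b) is the regularized incomplete beta function at 1/2 (the sum over s being empty when r = 1). -/

import Mathlib

open Real Finset intervalIntegral

/-- Odd factorial OF(2k) as a function of k ∈ ℤ: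
    OF(2k) = ∏_{i=1}^k (2i-1) for k ≥ 0, and OF(-2k) = (-1)^k / OF(2k). -/
noncomputable def OF2 (k : ℤ) : ℝ :=
  if 0 ≤ k then ∏ i ∈ Finset.range k.toNat, (2 * (i : ℝ) + 1)
  else (-1) ^ (-k).toNat / ∏ i ∈ Finset.range (-k).toNat, (2 * (i : ℝ) + 1)

/-- C(r) = -Σ_{s,t=0}^{r-1} OF(2s+2t-2) / (2^{2s+2t} s! t!). -/
noncomputable def Cconst (r : ℕ) : ℝ :=
  -∑ s ∈ Finset.range r, ∑ t ∈ Finset.range r,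
      OF2 ((s : ℤ) + t - 1) / (2 ^ (2 * s + 2 * t) * Nat.factorial s * Nat.factorial t)

/-- Regularized incomplete beta function I_z(a, b). -/
noncomputable def regIncBeta (z a b : ℝ) : ℝ :=
  (∫ t in (0 : ℝ)..z, t ^ (a - 1) * (1 - t) ^ (b - 1)) /
    ∫ t in (0 : ℝ)..1, t ^ (a - 1) * (1 - t) ^ (b - 1)

/-!
Through `Γ(k - 1/2) 2^k = 2 √π OF(2k - 2)` the summand of `C(r)` becomes
`c (s+t) * binom(s+t, s) / 2^(s+t+1)` with `c k = Γ(k - 1/2) / (√π k!)`, i.e. `-2` times the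
coefficient of `x^k` in `√(1 - x)`. Summed along the diagonals `s + t = k`, the part of row `k`
of Pascal's triangle inside the square `[0, r)²` is `2^k` minus two tails
`∑_{i ≥ r} binom(k, i)`, mirror images of each other. The `2^k` part telescopes, since
`-½ ∑_{k ≤ N} c k = Γ(N + 1/2) / (√π N!)`, and the tails are the incomplete beta values: the
derivative of `∑_{j ≤ n} b_{a+n+1, a+j+1}` (Bernstein polynomials) telescopes to
`(a+n+1) b_{a+n, a}`, so this sum is `I_z(a+1, n+1)`.
-/

lemma Real.Gamma_neg_half : Gamma (-1 / 2) = -2 * √π := by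
  have h := Real.Gamma_add_one (s := -1 / 2) (by norm_num)
  rw [show (-1 / 2 : ℝ) + 1 = 1 / 2 by norm_num, Real.Gamma_one_half_eq] at h
  linarith

lemma Gamma_natCast_add_half_mul_two_pow (n : ℕ) :
    Gamma (n + 1 / 2) * 2 ^ n = √π * OF2 n := by
  induction n with
  | zero => rw [Nat.cast_zero, zero_add, Real.Gamma_one_half_eq]; simp [OF2]
  | succ n ih =>
    have hOF : OF2 ((n + 1 : ℕ) : ℤ) = OF2 n * (2 * n + 1) := by
      rw [OF2, OF2, if_pos (by positivity), if_pos (by positivity)]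
      simp [prod_range_succ]
    rw [hOF, show ((n + 1 : ℕ) : ℝ) + 1 / 2 = (n + 1 / 2) + 1 by push_cast; ring,
      Real.Gamma_add_one (by positivity)]
    linear_combination (2 * (n : ℝ) + 1) * ih

lemma Gamma_natCast_sub_half_mul_two_pow (k : ℕ) :
    Gamma (k - 1 / 2) * 2 ^ k = 2 * √π * OF2 ((k : ℤ) - 1) := by
  cases k with
  | zero => rw [Nat.cast_zero, zero_sub, ← neg_div, Real.Gamma_neg_half]; norm_num [OF2]
  | succ n =>
    rw [show ((n + 1 : ℕ) : ℝ) - 1 / 2 = n + 1 / 2 by push_cast; ring,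
      show ((n + 1 : ℕ) : ℤ) - 1 = n by push_cast; ring, pow_succ, ← mul_assoc,
      Gamma_natCast_add_half_mul_two_pow]
    ring

noncomputable def gammaRatio (k : ℕ) : ℝ := Gamma (k - 1 / 2) / (√π * Gamma (k + 1))

lemma sum_range_gammaRatio (N : ℕ) :
    ∑ k ∈ range (N + 1), gammaRatio k = -2 * (Gamma (N + 1 / 2) / (√π * Gamma (N + 1))) := by
  have hπ : √π ≠ 0 := by positivity
  induction N with
  | zero =>
    rw [sum_range_one, gammaRatio, Nat.cast_zero, zero_sub, ← neg_div,
      Real.Gamma_neg_half]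
    simp only [zero_add, Real.Gamma_one_half_eq, Real.Gamma_one]
    field_simp
  | succ N ih =>
    have hΓ : Gamma ((N : ℝ) + 1) ≠ 0 := (Real.Gamma_pos_of_pos (by positivity)).ne'
    rw [sum_range_succ, ih, gammaRatio]
    push_cast
    rw [show (N : ℝ) + 1 - 1 / 2 = N + 1 / 2 by ring,
      show (N : ℝ) + 1 + 1 / 2 = (N + 1 / 2) + 1 by ring,
      Real.Gamma_add_one (s := (N : ℝ) + 1 / 2) (by positivity),
      Real.Gamma_add_one (s := (N : ℝ) + 1) (by positivity)]
    field_simp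
    ring

lemma sum_range_sum_range_eq_sum_diag {M : Type*} [AddCommMonoid M] (r : ℕ) (f : ℕ → ℕ → M) :
    ∑ s ∈ range r, ∑ t ∈ range r, f s t =
      ∑ k ∈ range (2 * r - 1), ∑ s ∈ Ico (k + 1 - r) (min r (k + 1)), f s (k - s) := by
  have hshift : ∀ s, ∑ t ∈ range r, f s t = ∑ k ∈ Ico s (s + r), f s (k - s) := fun s => by
    simp only [sum_Ico_eq_sum_range, Nat.add_sub_cancel_left]
  simp only [hshift]
  exact sum_comm' fun s k => by simp only [mem_range, mem_Ico]; omega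

lemma sum_choose_diag_add_two_mul_sum_choose_Ico (r k : ℕ) (hk : k + 1 ≤ 2 * r) :
    ∑ s ∈ Ico (k + 1 - r) (min r (k + 1)), k.choose s + 2 * ∑ i ∈ Ico r (k + 1), k.choose i =
      2 ^ k := by
  have hlow : ∑ i ∈ Ico 0 (k + 1 - r), k.choose i = ∑ i ∈ Ico r (k + 1), k.choose i := calc
    _ = ∑ i ∈ Ico 0 (k + 1 - r), k.choose (k - i) :=
      sum_congr rfl fun i hi => (Nat.choose_symm (by simp only [mem_Ico] at hi; omega)).symm
    _ = ∑ i ∈ Ico (k + 1 - (k + 1 - r)) (k + 1 - 0), k.choose i := sum_Ico_reflect _ _ (by omega)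
    _ = _ := by congr 1; ext i; simp only [mem_Ico]; omega
  have hhigh :
      ∑ i ∈ Ico (min r (k + 1)) (k + 1), k.choose i = ∑ i ∈ Ico r (k + 1), k.choose i := by
    congr 1; ext i; simp only [mem_Ico]; omega
  rw [← Nat.sum_range_choose, range_eq_Ico,
    ← sum_Ico_consecutive _ (Nat.zero_le (k + 1 - r)) (by omega : k + 1 - r ≤ k + 1),
    ← sum_Ico_consecutive _ (by omega : k + 1 - r ≤ min r (k + 1))
      (by omega : min r (k + 1) ≤ k + 1),
    hlow, hhigh]
  ring

open Polynomial in
lemma derivative_sum_bernsteinPolynomial (a n : ℕ) :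
    derivative (∑ j ∈ range (n + 1), bernsteinPolynomial ℝ (a + n + 1) (a + j + 1)) =
      (a + n + 1 : ℕ) * bernsteinPolynomial ℝ (a + n) a := by
  have htel : ∑ j ∈ range (n + 1), (bernsteinPolynomial ℝ (a + n) (a + j) -
      bernsteinPolynomial ℝ (a + n) (a + j + 1)) =
      bernsteinPolynomial ℝ (a + n) a - bernsteinPolynomial ℝ (a + n) (a + n + 1) :=
    sum_range_sub' (fun j => bernsteinPolynomial ℝ (a + n) (a + j)) (n + 1)
  simp only [derivative_sum, bernsteinPolynomial.derivative_succ_aux, ← mul_sum, htel,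
    bernsteinPolynomial.eq_zero_of_lt ℝ (Nat.lt_succ_self (a + n)), sub_zero]
  push_cast
  ring

lemma regIncBeta_eq_sum_bernsteinPolynomial (a n : ℕ) (z : ℝ) :
    regIncBeta z (a + 1) (n + 1) =
      ∑ j ∈ range (n + 1), (bernsteinPolynomial ℝ (a + n + 1) (a + j + 1)).eval z := by
  set G := ∑ j ∈ range (n + 1), bernsteinPolynomial ℝ (a + n + 1) (a + j + 1) with hG
  have hK : (0 : ℝ) < (a + n + 1 : ℕ) * (a + n).choose a := by
    have := Nat.choose_pos (Nat.le_add_right a n); positivity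
  have hG0 : G.eval 0 = 0 := by
    simp [G, Polynomial.eval_finsetSum, bernsteinPolynomial.eval_at_0]
  have hG1 : G.eval 1 = 1 := by
    simp [G, Polynomial.eval_finsetSum, bernsteinPolynomial.eval_at_1]
  have hintegral : ∀ x, ∫ t in (0 : ℝ)..x, t ^ ((a + 1 : ℝ) - 1) * (1 - t) ^ ((n + 1 : ℝ) - 1) =
      G.eval x / ((a + n + 1 : ℕ) * (a + n).choose a) := fun x => by
    have hFTC := intervalIntegral.integral_eq_sub_of_hasDerivAt (a := 0) (b := x)
      (fun t _ => G.hasDerivAt t) (G.derivative.continuous.intervalIntegrable _ _)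
    rw [hG0, sub_zero] at hFTC
    rw [eq_div_iff hK.ne', ← hFTC, ← intervalIntegral.integral_mul_const]
    congr 1; ext t
    rw [hG, derivative_sum_bernsteinPolynomial]
    simp only [add_sub_cancel_right, Real.rpow_natCast, Polynomial.eval_mul,
      Polynomial.eval_natCast, bernsteinPolynomial, Polynomial.eval_pow, Polynomial.eval_sub,
      Polynomial.eval_one, Polynomial.eval_X, Nat.add_sub_cancel_left]
    ring
  rw [regIncBeta, hintegral, hintegral, hG1, div_div_div_cancel_right₀ hK.ne', div_one, hG,
    Polynomial.eval_finsetSum]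

lemma regIncBeta_one_half (r n : ℕ) (hr : 0 < r) :
    regIncBeta (1 / 2) r (n + 1) =
      (∑ i ∈ Ico r (r + n + 1), ((r + n).choose i : ℝ)) / 2 ^ (r + n) := by
  obtain ⟨a, rfl⟩ : ∃ a, r = a + 1 := ⟨r - 1, by omega⟩
  rw [Nat.cast_add_one, regIncBeta_eq_sum_bernsteinPolynomial, sum_div,
    sum_Ico_eq_sum_range, show a + 1 + n + 1 - (a + 1) = n + 1 by omega]
  refine sum_congr rfl fun j hj => ?_
  have hj : j ≤ n := Nat.lt_succ_iff.mp (mem_range.mp hj)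
  rw [bernsteinPolynomial, show a + 1 + n = a + n + 1 by ring, show a + 1 + j = a + j + 1 by ring]
  simp only [Polynomial.eval_mul, Polynomial.eval_natCast, Polynomial.eval_pow,
    Polynomial.eval_sub, Polynomial.eval_one, Polynomial.eval_X]
  rw [show (1 : ℝ) - 1 / 2 = 1 / 2 by norm_num, mul_assoc, ← pow_add,
    show a + j + 1 + (a + n + 1 - (a + j + 1)) = a + n + 1 by omega, div_pow, one_pow]
  ring

lemma Cconst_eq_sum_gammaRatio (r : ℕ) :
    Cconst r = -∑ s ∈ range r, ∑ t ∈ range r,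
      gammaRatio (s + t) * (s + t).choose s / 2 ^ (s + t + 1) := by
  refine congrArg _ (sum_congr rfl fun s _ => sum_congr rfl fun t _ => ?_)
  have hΓ := eq_div_of_mul_eq (by positivity) (Gamma_natCast_sub_half_mul_two_pow (s + t))
  have hfact : ((s + t).choose s : ℝ) * s.factorial * t.factorial = (s + t).factorial := by
    rw [Nat.choose_symm_add]; exact_mod_cast Nat.add_choose_mul_factorial_mul_factorial s t
  have hC : ((s + t).choose s : ℝ) ≠ 0 := by
    exact_mod_cast (Nat.choose_pos (Nat.le_add_right s t)).ne'
  have hπ : √π ≠ 0 := by positivity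
  rw [gammaRatio, Real.Gamma_nat_eq_factorial, hΓ, ← hfact,
    show 2 * s + 2 * t = (s + t) + (s + t) by ring, pow_add]
  push_cast
  field_simp
  ring

lemma Cconst_eq_sum_gammaRatio_add_tail (r : ℕ) :
    Cconst r = -(1 / 2) * ∑ k ∈ range (2 * r - 1), gammaRatio k +
      ∑ k ∈ range (2 * r - 1),
        gammaRatio k * (∑ i ∈ Ico r (k + 1), (k.choose i : ℝ)) / 2 ^ k := by
  rw [Cconst_eq_sum_gammaRatio, sum_range_sum_range_eq_sum_diag, mul_sum, ← sum_neg_distrib,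
    ← sum_add_distrib]
  refine sum_congr rfl fun k hk => ?_
  have hfiber : ∀ s ∈ Ico (k + 1 - r) (min r (k + 1)), s + (k - s) = k := fun s hs => by
    simp only [mem_Ico] at hs; omega
  have hchoose : ∑ s ∈ Ico (k + 1 - r) (min r (k + 1)), (k.choose s : ℝ) +
      2 * ∑ i ∈ Ico r (k + 1), (k.choose i : ℝ) = 2 ^ k := by
    exact_mod_cast sum_choose_diag_add_two_mul_sum_choose_Ico r k (by simp at hk; omega)
  rw [sum_congr rfl fun s hs => by rw [hfiber s hs], ← sum_div, ← mul_sum, pow_succ]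
  field_simp
  linear_combination -gammaRatio k * hchoose

theorem Cconst_gamma_form (r : ℕ) (hr : 1 ≤ r) :
    Cconst r
      = Real.Gamma (2 * r - 3 / 2) / (Real.sqrt π * Real.Gamma (2 * r - 1)) +
        ∑ s ∈ Finset.range (r - 1),
          Real.Gamma ((r : ℝ) + s - 1 / 2) / (Real.sqrt π * Real.Gamma ((r : ℝ) + s + 1)) *
            regIncBeta (1 / 2) r (s + 1) := by
  have hbulk : -(1 / 2) * ∑ k ∈ range (2 * r - 1), gammaRatio k =
      Gamma (2 * r - 3 / 2) / (√π * Gamma (2 * r - 1)) := by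
    rw [show 2 * r - 1 = (2 * r - 2) + 1 by omega, sum_range_gammaRatio, Nat.cast_sub (by omega)]
    push_cast
    ring_nf
  have htail : ∑ k ∈ range (2 * r - 1),
      gammaRatio k * (∑ i ∈ Ico r (k + 1), (k.choose i : ℝ)) / 2 ^ k =
      ∑ s ∈ range (r - 1), Gamma ((r : ℝ) + s - 1 / 2) / (√π * Gamma ((r : ℝ) + s + 1)) *
        regIncBeta (1 / 2) r (s + 1) := by
    rw [show 2 * r - 1 = r + (r - 1) by omega, sum_range_add,
      sum_eq_zero fun k hk => by rw [Ico_eq_empty (by simp at hk; omega)]; simp, zero_add]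
    refine sum_congr rfl fun s _ => ?_
    rw [regIncBeta_one_half r s hr, gammaRatio, show r + s + 1 = r + (s + 1) by ring]
    push_cast
    ring
  rw [Cconst_eq_sum_gammaRatio_add_tail, hbulk, htail]
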